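/- arXiv:1407.5288 — 5 statements merged into one kernel-verified Lean document; each statement's English description precedes it below -/
import Mathlib

section
/- For any permutation g of a finite set Ω, if p is the smallest prime dividing the order of g (assuming g is not the identity), then the number of cycles of g (including fixed points as cycles of length 1) is at most |Ω|/p + ((p-1)/p)·fix(g), where fix(g) is the number of fixed points of g. -/
/-!
Weighting each point `ω` by `1 / |⟨g⟩ ω|`, the number of cycles is `∑ ω, 1 / |⟨g⟩ ω|`.
A cycle length divides `orderOf g`, so a point on a nontrivial cycle has weight at most `1 / p`,
while a fixed point has weight `1`. Hence there are at most `fix g + (|Ω| - fix g) / p` cycles.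
-/

/-- The number of cycles (orbits of the cyclic group generated by `g`) of a
permutation `g` on `Ω`, counting fixed points as cycles of length 1. -/
noncomputable def orbCount {Ω : Type*} [Fintype Ω] (g : Equiv.Perm Ω) : ℕ :=
  Nat.card (Quotient (MulAction.orbitRel (Subgroup.zpowers g) Ω))

/-- The number of fixed points of a permutation `g` on `Ω`. -/
noncomputable def fixCount {Ω : Type*} [Fintype Ω] (g : Equiv.Perm Ω) : ℕ :=
  Nat.card {ω : Ω // g ω = ω}

namespace MulAction

variable {G α : Type*} [Group G] [MulAction G α]

theorem mem_fixedPoints_zpowers_iff {g : G} {a : α} :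
    a ∈ fixedPoints (Subgroup.zpowers g) α ↔ g • a = a :=
  ⟨fun h => h ⟨g, Subgroup.mem_zpowers g⟩, by rintro h ⟨_, k, rfl⟩; exact mem_fixedBy_zpow h k⟩

theorem minFac_card_le_card_orbit [Finite G] {a : α} (ha : a ∉ fixedPoints G α) :
    (Nat.card G).minFac ≤ Nat.card (orbit G a) := by
  have : Fintype (orbit G a) := (Finite.finite_mulAction_orbit a).fintype
  have hdvd : Nat.card (orbit G a) ∣ Nat.card G := by
    rw [Nat.card_coe_set_eq, ← index_stabilizer]
    exact (stabilizer G a).index_dvd_card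
  have hne_one : Nat.card (orbit G a) ≠ 1 := by
    rwa [Nat.card_eq_fintype_card, ne_eq, ← mem_fixedPoints_iff_card_orbit_eq_one]
  have hne_zero : Nat.card (orbit G a) ≠ 0 :=
    Nat.card_ne_zero.2 ⟨(nonempty_orbit a).to_subtype, inferInstance⟩
  exact Nat.minFac_le_of_dvd (by omega) hdvd

theorem sum_inv_card_orbit {K : Type*} [DivisionSemiring K] [CharZero K] [Fintype α] :
    ∑ a : α, (Nat.card (orbit G a) : K)⁻¹ = Nat.card (orbitRel.Quotient G α) := by
  classical
  calc ∑ a : α, (Nat.card (orbit G a) : K)⁻¹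
      = ∑ x : Σ ω : orbitRel.Quotient G α, ω.orbit, (Nat.card x.1.orbit : K)⁻¹ :=
        Fintype.sum_equiv (selfEquivSigmaOrbits' G α) _ _ fun _ => rfl
    _ = ∑ ω : orbitRel.Quotient G α, ∑ _a : ω.orbit, (Nat.card ω.orbit : K)⁻¹ :=
        Fintype.sum_sigma _
    _ = Nat.card (orbitRel.Quotient G α) := by
        rw [Nat.card_eq_fintype_card, Fintype.card_eq_sum_ones, Nat.cast_sum]
        refine Finset.sum_congr rfl fun ω _ => ?_
        have hcard : (Nat.card ω.orbit : K) ≠ 0 :=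
          Nat.cast_ne_zero.2 (Nat.card_ne_zero.2 ⟨ω.nonempty_orbit.to_subtype, inferInstance⟩)
        rw [Finset.sum_const, Finset.card_univ, ← Nat.card_eq_fintype_card, nsmul_eq_mul,
          mul_inv_cancel₀ hcard, Nat.cast_one]

section LinearOrderedField

variable [Finite G] {K : Type*} [Field K] [LinearOrder K] [IsStrictOrderedRing K]

theorem inv_card_orbit_le [DecidablePred (· ∈ fixedPoints G α)] (a : α) :
    (Nat.card (orbit G a) : K)⁻¹ ≤ ((Nat.card G).minFac : K)⁻¹ +
      (1 - ((Nat.card G).minFac : K)⁻¹) * if a ∈ fixedPoints G α then 1 else 0 := by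
  have hp : (1 : K) ≤ (Nat.card G).minFac := Nat.one_le_cast.2 (Nat.minFac_pos _)
  have hcard : (1 : K) ≤ Nat.card (orbit G a) := by
    have := (Finite.finite_mulAction_orbit (M := G) a).to_subtype
    exact Nat.one_le_cast.2 (Nat.card_pos_iff.2 ⟨(nonempty_orbit a).to_subtype, inferInstance⟩)
  split_ifs with ha
  · simpa using inv_le_one_of_one_le₀ hcard
  · simpa using inv_anti₀ (by linarith) (Nat.cast_le.2 (minFac_card_le_card_orbit ha))

theorem card_orbitRel_quotient_le [Fintype α] :
    (Nat.card (orbitRel.Quotient G α) : K) ≤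
      Nat.card α / (Nat.card G).minFac +
        ((Nat.card G).minFac - 1) / (Nat.card G).minFac * Nat.card (fixedPoints G α) := by
  classical
  have hp : ((Nat.card G).minFac : K) ≠ 0 := Nat.cast_ne_zero.2 (Nat.minFac_pos _).ne'
  calc (Nat.card (orbitRel.Quotient G α) : K)
      = ∑ a : α, (Nat.card (orbit G a) : K)⁻¹ := sum_inv_card_orbit.symm
    _ ≤ ∑ a : α, (((Nat.card G).minFac : K)⁻¹ +
          (1 - ((Nat.card G).minFac : K)⁻¹) * if a ∈ fixedPoints G α then 1 else 0) :=
        Finset.sum_le_sum fun a _ => inv_card_orbit_le a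
    _ = _ := by
        rw [Finset.sum_add_distrib, ← Finset.mul_sum, Finset.sum_boole, Finset.sum_const,
          Finset.card_univ, nsmul_eq_mul, ← Fintype.card_subtype, ← Nat.card_eq_fintype_card,
          ← Nat.card_eq_fintype_card]
        field_simp

end LinearOrderedField

end MulAction

theorem stmt0_general {Ω : Type*} [Fintype Ω] (g : Equiv.Perm Ω) :
    (orbCount g : ℝ) ≤
      (Fintype.card Ω : ℝ) / (orderOf g).minFac +
        (((orderOf g).minFac : ℝ) - 1) / (orderOf g).minFac * fixCount g := by
  have hfix : fixCount g = Nat.card (MulAction.fixedPoints (Subgroup.zpowers g) Ω) :=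
    Nat.card_congr <| Equiv.subtypeEquivRight fun ω =>
      (MulAction.mem_fixedPoints_zpowers_iff (g := g) (a := ω)).symm
  rw [hfix, ← Nat.card_zpowers, ← Nat.card_eq_fintype_card]
  exact MulAction.card_orbitRel_quotient_le

theorem stmt0 {Ω : Type*} [Fintype Ω] (g : Equiv.Perm Ω) (hg : g ≠ 1) :
    (orbCount g : ℝ) ≤
      (Fintype.card Ω : ℝ) / (orderOf g).minFac +
        (((orderOf g).minFac : ℝ) - 1) / (orderOf g).minFac * fixCount g :=
  stmt0_general g
end

section
/- The switching class of the complete multipartite graph K_{r,r,…,r} with parts of size r ≥ 3 contains no graph with trivial automorphism group: for every subset X of vertices, the switched graph σ_X(K_{r,…,r}) admits a non-identity automorphism. -/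
/-!
Some part of `K_{r,…,r}` contains two vertices on the same side of the switching set `X`, since
`r ≥ 3` points cannot be split among two sides with at most one point each. Transposing them fixes
every part and every side of `X`, so it preserves both the multipartite adjacency and the pattern
that switching complements.
-/

/-- Seidel switching of a simple graph `Γ` with respect to a set `X` of vertices:
adjacency between `X` and its complement is complemented, adjacency within `X`
or within the complement is unchanged. -/
def switching {Ω : Type*} (X : Set Ω) (Γ : SimpleGraph Ω) : SimpleGraph Ω where
  Adj u v := ((u ∈ X ↔ v ∈ X) ∧ Γ.Adj u v) ∨ (¬(u ∈ X ↔ v ∈ X) ∧ ¬Γ.Adj u v)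
  symm := by
    refine ⟨?_⟩
    intro u v h
    rcases h with ⟨h1, h2⟩ | ⟨h1, h2⟩
    · exact Or.inl ⟨h1.symm, h2.symm⟩
    · exact Or.inr ⟨fun h => h1 h.symm, fun h => h2 h.symm⟩
  loopless := by
    refine ⟨?_⟩
    intro u h
    rcases h with ⟨_, h⟩ | ⟨h, _⟩
    · exact Γ.loopless.irrefl u h
    · exact h Iff.rfl

theorem Equiv.apply_swap_apply_of_apply_eq {α β : Type*} [DecidableEq α] {f : α → β} {a b : α}
    (h : f a = f b) (x : α) : f (Equiv.swap a b x) = f x := by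
  rcases eq_or_ne x a with rfl | hxa
  · rw [Equiv.swap_apply_left, h]
  rcases eq_or_ne x b with rfl | hxb
  · rw [Equiv.swap_apply_right, h]
  · rw [Equiv.swap_apply_of_ne_of_ne hxa hxb]

theorem Set.exists_ne_mem_iff_mem_of_two_lt_card {α : Type*} [Fintype α]
    (hα : 2 < Fintype.card α) (s : Set α) : ∃ a b, a ≠ b ∧ (a ∈ s ↔ b ∈ s) := by
  obtain ⟨a, b, hab, hs⟩ := Fintype.exists_ne_map_eq_of_card_lt (fun x => x ∈ s)
    (by rwa [Fintype.card_prop])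
  exact ⟨a, b, hab, hs.to_iff⟩

namespace SimpleGraph

variable {Ω : Type*}

theorem comap_adj_apply_iff {β : Type*} {f : Ω → β} (G : SimpleGraph β) {g : Equiv.Perm Ω}
    (hg : ∀ x, f (g x) = f x) (u v : Ω) : (G.comap f).Adj (g u) (g v) ↔ (G.comap f).Adj u v := by
  simp only [comap_adj, hg]

theorem switching_adj_apply_iff {Γ : SimpleGraph Ω} {X : Set Ω} {g : Equiv.Perm Ω}
    (hΓ : ∀ u v, Γ.Adj (g u) (g v) ↔ Γ.Adj u v) (hX : ∀ x, g x ∈ X ↔ x ∈ X) (u v : Ω) :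
    (switching X Γ).Adj (g u) (g v) ↔ (switching X Γ).Adj u v := by
  simp only [switching, hΓ, hX]

end SimpleGraph

theorem stmt9 {ι : Type*} [Nonempty ι] (r : ℕ) (hr : 3 ≤ r)
    (X : Set (Σ _ : ι, Fin r)) :
    ∃ g : Equiv.Perm (Σ _ : ι, Fin r), g ≠ 1 ∧
      ∀ u v, (switching X (SimpleGraph.completeMultipartiteGraph (fun _ : ι => Fin r))).Adj (g u) (g v) ↔
        (switching X (SimpleGraph.completeMultipartiteGraph (fun _ : ι => Fin r))).Adj u v := by
  classical
  obtain ⟨i⟩ := ‹Nonempty ι›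
  obtain ⟨a, b, hab, hX⟩ := Set.exists_ne_mem_iff_mem_of_two_lt_card
    (by rwa [Fintype.card_fin]) ((fun a : Fin r => (⟨i, a⟩ : Σ _ : ι, Fin r)) ⁻¹' X)
  refine ⟨Equiv.swap ⟨i, a⟩ ⟨i, b⟩, by simpa [Equiv.swap_eq_one_iff] using hab, ?_⟩
  refine SimpleGraph.switching_adj_apply_iff
    (SimpleGraph.comap_adj_apply_iff _ (Equiv.apply_swap_apply_of_apply_eq rfl)) (fun x => ?_)
  exact (Equiv.apply_swap_apply_of_apply_eq (f := (· ∈ X)) (propext hX) x).to_iff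
end

section
/- If a switching class contains a graph Γ₀ with Aut(Γ₀) equal to the automorphism group of the whole switching class, then for every X ⊆ Ω the automorphism group of σ_X(Γ₀) is the stabilizer in Aut(Γ₀) of the partition {X, Ω \ X}. -/
/-!
Relabelling by a permutation `g` commutes with switching: `(σ_X Γ)^g = σ_{g⁻¹X} (Γ^g)`, and
two switchings `σ_A Γ`, `σ_B Γ` of the same graph coincide exactly when `A = B` or `A = Bᶜ`.
If `g` preserves `σ_X Γ₀`, then `Γ₀^g = σ_{X ∆ g⁻¹X} Γ₀` lies in the switching class, so the
hypothesis makes `g` an automorphism of `Γ₀`; then `σ_{g⁻¹X} Γ₀ = σ_X Γ₀` forces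
`g⁻¹X ∈ {X, Xᶜ}`. Conversely an automorphism of `Γ₀` fixing `{X, Xᶜ}` preserves `σ_X Γ₀`.
-/

open scoped symmDiff

theorem Set.eq_or_eq_compl_of_forall_iff_iff {α : Type*} {A B : Set α}
    (h : ∀ u v, (u ∈ A ↔ v ∈ A) ↔ (u ∈ B ↔ v ∈ B)) : A = B ∨ A = Bᶜ := by
  rcases isEmpty_or_nonempty α with _ | ⟨⟨v₀⟩⟩
  · exact .inl (Subsingleton.elim A B)
  by_cases h₀ : v₀ ∈ A ↔ v₀ ∈ B
  · left; ext u; grind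
  · right; ext u; grind

theorem Equiv.Perm.preimage_eq_or_eq_compl_iff {α : Type*} (g : Equiv.Perm α) (X : Set α) :
    (g ⁻¹' X = X ∨ g ⁻¹' X = Xᶜ) ↔ (g '' X = X ∨ g '' X = Xᶜ) := by
  rw [g.preimage_eq_iff_eq_image, g.preimage_eq_iff_eq_image, g.image_compl, eq_compl_comm,
    eq_comm (a := X)]

namespace SimpleGraph

variable {V W : Type*}

theorem comap_eq_iff_forall_adj {f : V → W} {G : SimpleGraph W} {H : SimpleGraph V} :
    G.comap f = H ↔ ∀ u v, G.Adj (f u) (f v) ↔ H.Adj u v := by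
  simp [← adj_inj, funext_iff]

theorem switching_adj_iff (X : Set V) (G : SimpleGraph V) (u v : V) :
    (switching X G).Adj u v ↔ ((u ∈ X ↔ v ∈ X) ↔ G.Adj u v) := by
  change (_ ∧ _ ∨ _ ∧ _) ↔ _
  tauto

theorem comap_switching (f : V → W) (X : Set W) (G : SimpleGraph W) :
    (switching X G).comap f = switching (f ⁻¹' X) (G.comap f) := rfl

theorem switching_switching (X Y : Set V) (G : SimpleGraph V) :
    switching X (switching Y G) = switching (X ∆ Y) G := by
  ext u v
  simp only [switching_adj_iff, Set.mem_symmDiff]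
  grind

theorem switching_switching_self (X : Set V) (G : SimpleGraph V) :
    switching X (switching X G) = G := by
  ext u v
  simp only [switching_adj_iff]
  grind

theorem switching_compl (X : Set V) (G : SimpleGraph V) :
    switching Xᶜ G = switching X G := by
  ext u v
  simp only [switching_adj_iff, Set.mem_compl_iff, not_iff_not]

theorem switching_eq_switching_iff {A B : Set V} {G : SimpleGraph V} :
    switching A G = switching B G ↔ A = B ∨ A = Bᶜ := by
  refine ⟨fun h => Set.eq_or_eq_compl_of_forall_iff_iff fun u v => ?_, ?_⟩
  · obtain rfl | huv := eq_or_ne u v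
    · simp
    have hadj := congrArg (fun G => G.Adj u v) h
    simp only [switching_adj_iff, eq_iff_iff] at hadj
    tauto
  · rintro (rfl | rfl)
    · rfl
    · exact switching_compl B G

end SimpleGraph

theorem stmt11 {Ω : Type*} (Γ₀ : SimpleGraph Ω)
    (hI : {g : Equiv.Perm Ω | ∀ u v, Γ₀.Adj (g u) (g v) ↔ Γ₀.Adj u v} =
      {g : Equiv.Perm Ω | ∃ Y : Set Ω,
        ∀ u v, (switching Y Γ₀).Adj (g u) (g v) ↔ Γ₀.Adj u v}) (X : Set Ω) :
    {g : Equiv.Perm Ω |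
        ∀ u v, (switching X Γ₀).Adj (g u) (g v) ↔ (switching X Γ₀).Adj u v} =
      {g : Equiv.Perm Ω | (∀ u v, Γ₀.Adj (g u) (g v) ↔ Γ₀.Adj u v) ∧
        (g '' X = X ∨ g '' X = Xᶜ)} := by
  simp only [← SimpleGraph.comap_eq_iff_forall_adj, SimpleGraph.comap_switching] at hI ⊢
  ext g
  simp only [Set.mem_ofPred_eq, ← g.preimage_eq_or_eq_compl_iff]
  refine ⟨fun hg => ?_, fun ⟨hAut, hX⟩ => by rwa [hAut, SimpleGraph.switching_eq_switching_iff]⟩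
  have hAut : Γ₀.comap g = Γ₀ := by
    suffices g ∈ {g : Equiv.Perm Ω | ∃ Y, switching (g ⁻¹' Y) (Γ₀.comap g) = Γ₀} by
      rwa [← hI] at this
    refine ⟨(g '' X) ∆ X, ?_⟩
    rw [Set.preimage_symmDiff, g.preimage_image, ← SimpleGraph.switching_switching, hg,
      SimpleGraph.switching_switching_self]
  rw [hAut, SimpleGraph.switching_eq_switching_iff] at hg
  exact ⟨hAut, hg⟩
end

section
/- If a subset X of Ω lies in a self-complementary orbit of G ≤ Sym(Ω) on 2^Ω, then there exists g ∈ G of 2-power order, acting without fixed points on Ω, such that Ω = X ∪ g(X) and X ∩ g(X) = ∅. -/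
/-!
If `h ∈ G` maps `X` onto its complement, then so does every odd power of `h`, since `h²` fixes `X`.
Taking the odd part `m` of the order of `h`, the element `g = h ^ m` has `2`-power order and still
swaps `X` with `Xᶜ`; an element swapping a set with its complement can fix no point.
-/

open Set

namespace Equiv.Perm

variable {α : Type*} {f : Perm α} {X : Set α}

theorem image_sq_eq_of_image_eq_compl (hf : f '' X = Xᶜ) : ⇑(f ^ 2) '' X = X := by
  rw [sq, coe_mul, image_comp, hf, image_compl_eq f.bijective, hf, compl_compl]

theorem image_pow_eq_of_image_eq_self (hf : f '' X = X) (n : ℕ) : ⇑(f ^ n) '' X = X := by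
  induction n with
  | zero => simp
  | succ n ih => rw [pow_succ, coe_mul, image_comp, hf, ih]

theorem image_pow_eq_compl_of_odd (hf : f '' X = Xᶜ) {n : ℕ} (hn : Odd n) :
    ⇑(f ^ n) '' X = Xᶜ := by
  obtain ⟨j, rfl⟩ := hn
  rw [pow_succ, pow_mul, coe_mul, image_comp, hf, image_compl_eq ((f ^ 2) ^ j).bijective,
    image_pow_eq_of_image_eq_self (image_sq_eq_of_image_eq_compl hf)]

theorem apply_ne_self_of_image_eq_compl (hf : f '' X = Xᶜ) (a : α) : f a ≠ a := by
  intro ha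
  have hmem : f a ∈ f '' X ↔ a ∈ X := f.injective.mem_set_image
  rw [hf, ha, mem_compl_iff] at hmem
  exact not_iff_self hmem

end Equiv.Perm

theorem orderOf_pow_ordCompl {G : Type*} [Monoid G] {x : G} (hx : orderOf x ≠ 0) (p : ℕ) :
    orderOf (x ^ ordCompl[p] (orderOf x)) = p ^ (orderOf x).factorization p := by
  have hpos := Nat.ordCompl_pos p hx
  rw [orderOf_pow_of_dvd hpos.ne' (Nat.ordCompl_dvd _ p)]
  exact Nat.div_eq_of_eq_mul_left hpos (Nat.ordProj_mul_ordCompl_eq_self _ p).symm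

theorem stmt17 {Ω : Type*} [Fintype Ω] (G : Subgroup (Equiv.Perm Ω)) (X : Set Ω)
    (hself : ∃ h ∈ G, h '' X = Xᶜ) :
    ∃ g ∈ G, (∃ k : ℕ, orderOf g = 2 ^ k) ∧ (∀ ω : Ω, g ω ≠ ω) ∧
      X ∪ g '' X = Set.univ ∧ X ∩ g '' X = ∅ := by
  obtain ⟨h, hG, hX⟩ := hself
  have hn : orderOf h ≠ 0 := (orderOf_pos h).ne'
  have hodd : Odd (ordCompl[2] (orderOf h)) :=
    Nat.odd_iff.mpr (Nat.two_dvd_ne_zero.mp (Nat.not_dvd_ordCompl Nat.prime_two hn))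
  have hgX := Equiv.Perm.image_pow_eq_compl_of_odd hX hodd
  refine ⟨_, pow_mem hG _, ⟨_, orderOf_pow_ordCompl hn 2⟩,
    Equiv.Perm.apply_ne_self_of_image_eq_compl hgX, ?_, ?_⟩
  · rw [hgX, union_compl_self]
  · rw [hgX, inter_compl_self]
end

section
/- Let m ≥ 9 and let Ω be the set of 2-subsets of {1,…,m}. The set τ of 3-subsets {α,β,γ} of Ω such that α, β, γ are the three edges of a star K_{1,3}, a triangle K_3, or a graph K_{1,2} ∪ K_2 (two edges sharing a vertex plus a disjoint edge) forms a two-graph, i.e., every 4-subset of Ω contains an even number of members of τ. -/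
open scoped Classical

/-- Three pairwise distinct edges (2-subsets of `{1,…,m}`) form a star `K_{1,3}`:
they share a common vertex. -/
def IsStar {m : ℕ} (α β γ : {s : Finset (Fin m) // s.card = 2}) : Prop :=
  ∃ x : Fin m, x ∈ α.1 ∧ x ∈ β.1 ∧ x ∈ γ.1

/-- Three pairwise distinct edges form a triangle `K₃`: they span three vertices. -/
def IsTriangle {m : ℕ} (α β γ : {s : Finset (Fin m) // s.card = 2}) : Prop :=
  (α.1 ∪ β.1 ∪ γ.1).card = 3

/-- Three pairwise distinct edges form `K_{1,2} ∪ K_2`: two of them share a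
vertex, and the third is disjoint from both. -/
def IsPathPlusEdge {m : ℕ} (α β γ : {s : Finset (Fin m) // s.card = 2}) : Prop :=
  ((α.1 ∩ β.1).Nonempty ∧ α.1 ∩ γ.1 = ∅ ∧ β.1 ∩ γ.1 = ∅) ∨
  ((α.1 ∩ γ.1).Nonempty ∧ α.1 ∩ β.1 = ∅ ∧ γ.1 ∩ β.1 = ∅) ∨
  ((β.1 ∩ γ.1).Nonempty ∧ β.1 ∩ α.1 = ∅ ∧ γ.1 ∩ α.1 = ∅)

/-- The collection `τ` of 3-subsets of `Ω` (the 2-subsets of `{1,…,m}`) whose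
three elements form a star `K_{1,3}`, a triangle `K₃`, or `K_{1,2} ∪ K_2`. -/
def tau (m : ℕ) : Set (Finset {s : Finset (Fin m) // s.card = 2}) :=
  {T | ∃ α β γ : {s : Finset (Fin m) // s.card = 2},
    α ≠ β ∧ α ≠ γ ∧ β ≠ γ ∧ T = {α, β, γ} ∧
    (IsStar α β γ ∨ IsTriangle α β γ ∨ IsPathPlusEdge α β γ)}

abbrev Edge (m : ℕ) := {s : Finset (Fin m) // s.card = 2}

/-- indicator of disjointness -/
def eD {m : ℕ} (a b : Edge m) : ℕ := if a.1 ∩ b.1 = ∅ then 1 else 0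

lemma eD_comm {m : ℕ} (a b : Edge m) : eD a b = eD b a := by
  unfold eD; rw [Finset.inter_comm]

lemma edge_eq_pair {m : ℕ} {s : Finset (Fin m)} (hs : s.card = 2) {p : Fin m}
    (hp : p ∈ s) : ∃ u, u ≠ p ∧ s = {p, u} := by
  obtain ⟨x, y, hxy, rfl⟩ := Finset.card_eq_two.mp hs
  simp only [Finset.mem_insert, Finset.mem_singleton] at hp
  rcases hp with rfl | rfl
  · exact ⟨y, hxy.symm, rfl⟩
  · exact ⟨x, hxy, by rw [Finset.pair_comm]⟩

lemma star_or_triangle {m : ℕ} {a b c : Edge m} (hab : a ≠ b) (hac : a ≠ c) (hbc : b ≠ c)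
    (h1 : (a.1 ∩ b.1).Nonempty) (h2 : (a.1 ∩ c.1).Nonempty) (h3 : (b.1 ∩ c.1).Nonempty) :
    IsStar a b c ∨ IsTriangle a b c := by
  by_cases hs : IsStar a b c
  · exact Or.inl hs
  right
  unfold IsStar at hs; push_neg at hs
  obtain ⟨p, hp⟩ := h1
  obtain ⟨q, hq⟩ := h2
  simp only [Finset.mem_inter] at hp hq
  have hpq : p ≠ q := by
    rintro rfl
    exact (hs p hp.1 hp.2) hq.2
  -- a.1 = {p, q}
  have ha : a.1 = {p, q} := by
    apply (Finset.eq_of_subset_of_card_le ?_ ?_).symm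
    · intro z hz
      simp only [Finset.mem_insert, Finset.mem_singleton] at hz
      rcases hz with rfl | rfl
      · exact hp.1
      · exact hq.1
    · rw [a.2, Finset.card_insert_of_notMem (by simpa using hpq), Finset.card_singleton]
  have hqb : q ∉ b.1 := fun h => (hs q hq.1 h) hq.2
  have hpc : p ∉ c.1 := fun h => (hs p hp.1 hp.2) h
  obtain ⟨u, hup, hb⟩ := edge_eq_pair b.2 hp.2
  obtain ⟨v, hvq, hc⟩ := edge_eq_pair c.2 hq.2
  have huq : u ≠ q := fun h => hqb (by rw [hb, h]; simp)
  obtain ⟨r, hr⟩ := h3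
  simp only [Finset.mem_inter, hb, hc, Finset.mem_insert, Finset.mem_singleton] at hr
  have hru : r = u := by
    rcases hr.1 with rfl | rfl
    · exfalso; apply hpc; rw [hc]
      rcases hr.2 with rfl | rfl <;> simp
    · rfl
  have huv : u = v := by
    rcases hr.2 with h | h
    · exact absurd (hru.symm.trans h) huq
    · exact hru.symm.trans h
  unfold IsTriangle
  have hU : a.1 ∪ b.1 ∪ c.1 = {p, q, u} := by
    rw [ha, hb, hc, ← huv]
    ext z
    simp only [Finset.mem_union, Finset.mem_insert, Finset.mem_singleton]
    tauto
  rw [hU, Finset.card_insert_of_notMem (by simp [hpq, Ne.symm hup]),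
    Finset.card_insert_of_notMem (by simp [Ne.symm huq]), Finset.card_singleton]

lemma triangle_inter {m : ℕ} {a b c : Edge m} (h : IsTriangle a b c) :
    (a.1 ∩ b.1).Nonempty ∧ (a.1 ∩ c.1).Nonempty ∧ (b.1 ∩ c.1).Nonempty := by
  unfold IsTriangle at h
  have key : ∀ x y : Edge m, x.1 ∪ y.1 ⊆ a.1 ∪ b.1 ∪ c.1 → (x.1 ∩ y.1).Nonempty := by
    intro x y hsub
    rw [← Finset.card_pos]
    have h1 : (x.1 ∪ y.1).card ≤ 3 := h ▸ Finset.card_le_card hsub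
    have h2 := Finset.card_union_add_card_inter x.1 y.1
    rw [x.2, y.2] at h2
    omega
  refine ⟨key a b ?_, key a c ?_, key b c ?_⟩ <;> intro z hz <;>
    simp only [Finset.mem_union] at hz ⊢ <;> tauto

lemma key_iff {m : ℕ} {a b c : Edge m} (hab : a ≠ b) (hac : a ≠ c) (hbc : b ≠ c) :
    (IsStar a b c ∨ IsTriangle a b c ∨ IsPathPlusEdge a b c) ↔
      Even (eD a b + eD a c + eD b c) := by
  by_cases d1 : a.1 ∩ b.1 = ∅ <;> by_cases d2 : a.1 ∩ c.1 = ∅ <;>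
    by_cases d3 : b.1 ∩ c.1 = ∅ <;>
    simp only [eD, d1, d2, d3, if_true, if_false, if_pos, if_neg, ite_true, ite_false]
  -- case 1: all disjoint
  · rw [iff_false_intro (by decide : ¬ Even (1+1+1)), iff_false]
    rintro (⟨x, hx1, hx2, _⟩ | ht | hp)
    · exact absurd (d1 ▸ Finset.mem_inter.mpr ⟨hx1, hx2⟩) (Finset.notMem_empty x)
    · exact (triangle_inter ht).1.ne_empty d1
    · rcases hp with ⟨h, _⟩ | ⟨h, _⟩ | ⟨h, _⟩
      · exact h.ne_empty d1
      · exact h.ne_empty d2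
      · exact h.ne_empty d3
  -- case 2: a∩b=∅, a∩c=∅, b∩c ≠ ∅
  · rw [iff_true_intro (by decide : Even (1+1+0)), iff_true]
    right; right
    exact Or.inr (Or.inr ⟨Finset.nonempty_iff_ne_empty.mpr d3,
      by rwa [Finset.inter_comm], by rwa [Finset.inter_comm]⟩)
  -- case 3: a∩b=∅, b∩c=∅, a∩c ≠ ∅
  · rw [iff_true_intro (by decide : Even (1+0+1)), iff_true]
    right; right
    exact Or.inr (Or.inl ⟨Finset.nonempty_iff_ne_empty.mpr d2, d1,
      by rwa [Finset.inter_comm]⟩)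
  -- case 4: a∩b=∅ only
  · rw [iff_false_intro (by decide : ¬ Even (1+0+0)), iff_false]
    rintro (⟨x, hx1, hx2, _⟩ | ht | hp)
    · exact absurd (d1 ▸ Finset.mem_inter.mpr ⟨hx1, hx2⟩) (Finset.notMem_empty x)
    · exact (triangle_inter ht).1.ne_empty d1
    · rcases hp with ⟨h, _⟩ | ⟨_, _, h⟩ | ⟨_, _, h⟩
      · exact h.ne_empty d1
      · exact d3 (by rwa [Finset.inter_comm] at h)
      · exact d2 (by rwa [Finset.inter_comm] at h)
  -- case 5: a∩c=∅, b∩c=∅, a∩b ≠ ∅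
  · rw [iff_true_intro (by decide : Even (0+1+1)), iff_true]
    right; right
    exact Or.inl ⟨Finset.nonempty_iff_ne_empty.mpr d1, d2, d3⟩
  -- case 6: a∩c=∅ only
  · rw [iff_false_intro (by decide : ¬ Even (0+1+0)), iff_false]
    rintro (⟨x, hx1, hx2, hx3⟩ | ht | hp)
    · exact absurd (d2 ▸ Finset.mem_inter.mpr ⟨hx1, hx3⟩) (Finset.notMem_empty x)
    · exact (triangle_inter ht).2.1.ne_empty d2
    · rcases hp with ⟨_, _, h⟩ | ⟨h, _⟩ | ⟨_, h, _⟩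
      · exact d3 h
      · exact h.ne_empty d2
      · exact d1 (by rwa [Finset.inter_comm] at h)
  -- case 7: b∩c=∅ only
  · rw [iff_false_intro (by decide : ¬ Even (0+0+1)), iff_false]
    rintro (⟨x, hx1, hx2, hx3⟩ | ht | hp)
    · exact absurd (d3 ▸ Finset.mem_inter.mpr ⟨hx2, hx3⟩) (Finset.notMem_empty x)
    · exact (triangle_inter ht).2.2.ne_empty d3
    · rcases hp with ⟨_, h, _⟩ | ⟨_, h, _⟩ | ⟨h, _⟩
      · exact d2 h
      · exact d1 h
      · exact h.ne_empty d3
  -- case 8: none disjoint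
  · rw [iff_true_intro (by decide : Even (0+0+0)), iff_true]
    rcases star_or_triangle hab hac hbc (Finset.nonempty_iff_ne_empty.mpr d1)
      (Finset.nonempty_iff_ne_empty.mpr d2) (Finset.nonempty_iff_ne_empty.mpr d3) with h | h
    · exact Or.inl h
    · exact Or.inr (Or.inl h)

lemma perm_of_triple_eq {X : Type*} [DecidableEq X] {a b c a' b' c' : X}
    (hab : a ≠ b) (hac : a ≠ c) (hbc : b ≠ c)
    (h : ({a, b, c} : Finset X) = {a', b', c'}) :
    (a = a' ∧ b = b' ∧ c = c') ∨ (a = a' ∧ b = c' ∧ c = b') ∨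
    (a = b' ∧ b = a' ∧ c = c') ∨ (a = b' ∧ b = c' ∧ c = a') ∨
    (a = c' ∧ b = a' ∧ c = b') ∨ (a = c' ∧ b = b' ∧ c = a') := by
  have ha : a ∈ ({a', b', c'} : Finset X) := h ▸ (by simp)
  have hb : b ∈ ({a', b', c'} : Finset X) := h ▸ (by simp)
  have hc : c ∈ ({a', b', c'} : Finset X) := h ▸ (by simp)
  have ha' : a' ∈ ({a, b, c} : Finset X) := h ▸ (by simp)
  simp only [Finset.mem_insert, Finset.mem_singleton] at ha hb hc ha'
  rcases ha with rfl | rfl | rfl <;> rcases hb with h1 | h1 | h1 <;>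
    rcases hc with h2 | h2 | h2 <;> simp_all <;> tauto

lemma mem_tau_iff {m : ℕ} {a b c : Edge m} (hab : a ≠ b) (hac : a ≠ c) (hbc : b ≠ c) :
    ({a, b, c} : Finset (Edge m)) ∈ tau m ↔ Even (eD a b + eD a c + eD b c) := by
  constructor
  · rintro ⟨α, β, γ, h1, h2, h3, hT, hP⟩
    have hP' := (key_iff h1 h2 h3).mp hP
    rcases perm_of_triple_eq hab hac hbc hT with
      ⟨rfl, rfl, rfl⟩ | ⟨rfl, rfl, rfl⟩ | ⟨rfl, rfl, rfl⟩ |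
      ⟨rfl, rfl, rfl⟩ | ⟨rfl, rfl, rfl⟩ | ⟨rfl, rfl, rfl⟩ <;>
      simpa [eD_comm b a, eD_comm c a, eD_comm c b, Nat.add_comm, Nat.add_left_comm,
        Nat.add_assoc] using hP'
  · intro h
    exact ⟨a, b, c, hab, hac, hbc, rfl, (key_iff hab hac hbc).mpr h⟩

theorem stmt19 (m : ℕ) (hm : 9 ≤ m)
    (Q : Finset {s : Finset (Fin m) // s.card = 2}) (hQ : Q.card = 4) :
    Even ((Q.powersetCard 3).filter (fun T => T ∈ tau m)).card := by
  obtain ⟨a, t, hat, rfl, ht⟩ := Finset.card_eq_succ.mp hQ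
  obtain ⟨b, c, d, hbc, hbd, hcd, rfl⟩ := Finset.card_eq_three.mp ht
  simp only [Finset.mem_insert, Finset.mem_singleton, not_or] at hat
  obtain ⟨hab, hac, had⟩ := hat
  have card3 : ∀ x y z : Edge m, x ≠ y → x ≠ z → y ≠ z →
      ({x, y, z} : Finset (Edge m)).card = 3 := fun x y z h1 h2 h3 =>
    Finset.card_eq_three.mpr ⟨x, y, z, h1, h2, h3, rfl⟩
  have hpow : (insert a {b, c, d} : Finset (Edge m)).powersetCard 3 =
      {{a, b, c}, {a, b, d}, {a, c, d}, {b, c, d}} := by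
    ext T
    simp only [Finset.mem_powersetCard, Finset.mem_insert, Finset.mem_singleton]
    constructor
    · rintro ⟨hsub, hcard⟩
      have hQT : ((insert a {b, c, d} : Finset (Edge m)) \ T).card = 1 := by
        rw [Finset.card_sdiff_of_subset hsub, hQ, hcard]
      obtain ⟨x, hx⟩ := Finset.card_eq_one.mp hQT
      have hT : T = (insert a {b, c, d} : Finset (Edge m)) \ {x} := by
        rw [← hx, Finset.sdiff_sdiff_self_left, Finset.inter_eq_right.mpr hsub]
      have hxQ : x ∈ (insert a {b, c, d} : Finset (Edge m)) := by
        have : x ∈ (insert a {b, c, d} : Finset (Edge m)) \ T :=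
          hx ▸ Finset.mem_singleton_self x
        exact (Finset.mem_sdiff.mp this).1
      simp only [Finset.mem_insert, Finset.mem_singleton] at hxQ
      rcases hxQ with rfl | rfl | rfl | rfl
      · refine Or.inr (Or.inr (Or.inr ?_))
        rw [hT]; ext z
        simp only [Finset.mem_sdiff, Finset.mem_insert, Finset.mem_singleton]
        constructor
        · rintro ⟨h | h | h | h, hne⟩ <;> simp_all
        · rintro (h | h | h) <;> subst h <;> simp_all [Ne.symm hab, Ne.symm hac, Ne.symm had]
      · refine Or.inr (Or.inr (Or.inl ?_))
        rw [hT]; ext z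
        simp only [Finset.mem_sdiff, Finset.mem_insert, Finset.mem_singleton]
        constructor
        · rintro ⟨h | h | h | h, hne⟩ <;> simp_all
        · rintro (h | h | h) <;> subst h <;> simp_all [hab, Ne.symm hbc, Ne.symm hbd]
      · refine Or.inr (Or.inl ?_)
        rw [hT]; ext z
        simp only [Finset.mem_sdiff, Finset.mem_insert, Finset.mem_singleton]
        constructor
        · rintro ⟨h | h | h | h, hne⟩ <;> simp_all
        · rintro (h | h | h) <;> subst h <;> simp_all [hac, hbc, Ne.symm hcd]
      · refine Or.inl ?_
        rw [hT]; ext z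
        simp only [Finset.mem_sdiff, Finset.mem_insert, Finset.mem_singleton]
        constructor
        · rintro ⟨h | h | h | h, hne⟩ <;> simp_all
        · rintro (h | h | h) <;> subst h <;> simp_all [had, hbd, hcd]
    · have hsub : ∀ x y z : Edge m, x ∈ (insert a {b, c, d} : Finset (Edge m)) →
          y ∈ (insert a {b, c, d} : Finset (Edge m)) →
          z ∈ (insert a {b, c, d} : Finset (Edge m)) →
          ({x, y, z} : Finset (Edge m)) ⊆ insert a {b, c, d} := by
        intro x y z hx hy hz w hw
        simp only [Finset.mem_insert, Finset.mem_singleton] at hw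
        rcases hw with rfl | rfl | rfl <;> assumption
      rintro (rfl | rfl | rfl | rfl)
      · exact ⟨hsub a b c (by simp) (by simp) (by simp), card3 a b c hab hac hbc⟩
      · exact ⟨hsub a b d (by simp) (by simp) (by simp), card3 a b d hab had hbd⟩
      · exact ⟨hsub a c d (by simp) (by simp) (by simp), card3 a c d hac had hcd⟩
      · exact ⟨hsub b c d (by simp) (by simp) (by simp), card3 b c d hbc hbd hcd⟩
  have hd1 : ({a, b, c} : Finset (Edge m)) ≠ {a, b, d} := fun h => by
    have : d ∈ ({a, b, c} : Finset (Edge m)) := h ▸ (by simp)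
    simp only [Finset.mem_insert, Finset.mem_singleton] at this
    rcases this with h' | h' | h' <;> simp_all [Ne.symm had, Ne.symm hbd, Ne.symm hcd]
  have hd2 : ({a, b, c} : Finset (Edge m)) ≠ {a, c, d} := fun h => by
    have : d ∈ ({a, b, c} : Finset (Edge m)) := h ▸ (by simp)
    simp only [Finset.mem_insert, Finset.mem_singleton] at this
    rcases this with h' | h' | h' <;> simp_all [Ne.symm had, Ne.symm hbd, Ne.symm hcd]
  have hd3 : ({a, b, c} : Finset (Edge m)) ≠ {b, c, d} := fun h => by
    have : d ∈ ({a, b, c} : Finset (Edge m)) := h ▸ (by simp)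
    simp only [Finset.mem_insert, Finset.mem_singleton] at this
    rcases this with h' | h' | h' <;> simp_all [Ne.symm had, Ne.symm hbd, Ne.symm hcd]
  have hd4 : ({a, b, d} : Finset (Edge m)) ≠ {a, c, d} := fun h => by
    have : c ∈ ({a, b, d} : Finset (Edge m)) := h ▸ (by simp)
    simp only [Finset.mem_insert, Finset.mem_singleton] at this
    rcases this with h' | h' | h' <;> simp_all [Ne.symm hac, Ne.symm hbc, hcd]
  have hd5 : ({a, b, d} : Finset (Edge m)) ≠ {b, c, d} := fun h => by
    have : c ∈ ({a, b, d} : Finset (Edge m)) := h ▸ (by simp)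
    simp only [Finset.mem_insert, Finset.mem_singleton] at this
    rcases this with h' | h' | h' <;> simp_all [Ne.symm hac, Ne.symm hbc, hcd]
  have hd6 : ({a, c, d} : Finset (Edge m)) ≠ {b, c, d} := fun h => by
    have : b ∈ ({a, c, d} : Finset (Edge m)) := h ▸ (by simp)
    simp only [Finset.mem_insert, Finset.mem_singleton] at this
    rcases this with h' | h' | h' <;> simp_all [Ne.symm hab, hbc, hbd]
  rw [hpow, Finset.card_filter,
    Finset.sum_insert (by simp [hd1, hd2, hd3]),
    Finset.sum_insert (by simp [hd4, hd5]),
    Finset.sum_insert (by simp [hd6]), Finset.sum_singleton]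
  simp only [mem_tau_iff hab hac hbc, mem_tau_iff hab had hbd,
    mem_tau_iff hac had hcd, mem_tau_iff hbc hbd hcd]
  have h01 : ∀ u v : Edge m, eD u v = 0 ∨ eD u v = 1 := by
    intro u v; unfold eD; split <;> simp
  rcases h01 a b with h1 | h1 <;> rcases h01 a c with h2 | h2 <;>
    rcases h01 a d with h3 | h3 <;> rcases h01 b c with h4 | h4 <;>
    rcases h01 b d with h5 | h5 <;> rcases h01 c d with h6 | h6 <;>
    simp only [h1, h2, h3, h4, h5, h6] <;> decide
end
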